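/- Let κ > 0. Define the red parabola point R(γ) = ((2+κ/2)γ − (κ/2)γ², (3+κ/2)γ − κγ²) and the green parabola point G(γ′) = ((4+κ)²/(8κ) − (κ/2)γ′², (4+κ)²/(8κ) + γ′ − κγ′²). Then for γ, γ′ ∈ ℝ, R(γ) = G(γ′) if and only if either (γ = γ′ = 1/κ + 1/4) or (γ = 2/κ + 1/4 and γ′ = −1/4). The corresponding intersection points are P₀ = (3(4+κ)²/(32κ), (4+κ)(8+κ)/(16κ)) and P₁ = ((8+κ)(8+3κ)/(32κ), (4+κ)(8+κ)/(16κ)), respectively. -/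
import Mathlib


/-- Intersection of the red and green parabolae: `R(γ) = G(γ′)` iff
(`γ = γ′ = 1/κ + 1/4`) or (`γ = 2/κ + 1/4` and `γ′ = −1/4`); the corresponding
intersection points are `P₀ = (3(4+κ)²/(32κ), (4+κ)(8+κ)/(16κ))` and
`P₁ = ((8+κ)(8+3κ)/(32κ), (4+κ)(8+κ)/(16κ))`. -/
theorem red_green_parabolae_intersection (κ : ℝ) (hκ : 0 < κ) :
    (∀ γ γ' : ℝ,
      (((2 + κ / 2) * γ - (κ / 2) * γ ^ 2, (3 + κ / 2) * γ - κ * γ ^ 2)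
          = ((4 + κ) ^ 2 / (8 * κ) - (κ / 2) * γ' ^ 2,
             (4 + κ) ^ 2 / (8 * κ) + γ' - κ * γ' ^ 2))
        ↔ ((γ = 1 / κ + 1 / 4 ∧ γ' = 1 / κ + 1 / 4)
            ∨ (γ = 2 / κ + 1 / 4 ∧ γ' = -(1 / 4))))
    ∧ ((2 + κ / 2) * (1 / κ + 1 / 4) - (κ / 2) * (1 / κ + 1 / 4) ^ 2,
        (3 + κ / 2) * (1 / κ + 1 / 4) - κ * (1 / κ + 1 / 4) ^ 2)
        = (3 * (4 + κ) ^ 2 / (32 * κ), (4 + κ) * (8 + κ) / (16 * κ))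
    ∧ ((2 + κ / 2) * (2 / κ + 1 / 4) - (κ / 2) * (2 / κ + 1 / 4) ^ 2,
        (3 + κ / 2) * (2 / κ + 1 / 4) - κ * (2 / κ + 1 / 4) ^ 2)
        = ((8 + κ) * (8 + 3 * κ) / (32 * κ), (4 + κ) * (8 + κ) / (16 * κ)) := by
  have hκ0 : κ ≠ 0 := ne_of_gt hκ
  have h4κ : (4 : ℝ) + κ ≠ 0 := by positivity
  have hd : (4 + κ) ^ 2 / (8 * κ) * (8 * κ) = (4 + κ) ^ 2 := by field_simp
  refine ⟨?_, ?_, ?_⟩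
  · intro γ γ'
    constructor
    · intro h
      rw [Prod.mk.injEq] at h
      obtain ⟨h1, h2⟩ := h
      have key : (γ - γ') * (2 - κ * (γ + γ')) = 0 := by
        linear_combination 2 * h2 - 2 * h1
      have h1' : 4 * κ * (4 + κ) * γ - 4 * κ ^ 2 * γ ^ 2 + 4 * κ ^ 2 * γ' ^ 2
          = (4 + κ) ^ 2 := by
        linear_combination 8 * κ * h1 + hd
      rcases mul_eq_zero.mp key with hc | hc
      · left
        have hgg : γ' = γ := by linarith
        have h5 : (4 + κ) * (4 * κ * γ - (4 + κ)) = 0 := by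
          rw [hgg] at h1'
          linear_combination h1'
        have h6 : 4 * κ * γ - (4 + κ) = 0 := by
          rcases mul_eq_zero.mp h5 with h | h
          · exact absurd h h4κ
          · exact h
        have hγ : γ = 1 / κ + 1 / 4 := by
          field_simp
          linarith
        exact ⟨hγ, hgg.trans hγ⟩
      · right
        have h6 : κ * (4 * κ * γ - (8 + κ)) = 0 := by
          linear_combination h1' - 4 * (κ * γ - κ * γ' - 2) * hc
        have h7 : 4 * κ * γ - (8 + κ) = 0 := by
          rcases mul_eq_zero.mp h6 with h | h
          · exact absurd h hκ0
          · exact h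
        have hγ : γ = 2 / κ + 1 / 4 := by
          field_simp
          linarith
        refine ⟨hγ, ?_⟩
        have h8 : κ * (γ' + 1 / 4) = 0 := by linear_combination -hc - h7 / 4
        have h9 : γ' + 1 / 4 = 0 := by
          rcases mul_eq_zero.mp h8 with h | h
          · exact absurd h hκ0
          · exact h
        linarith
    · rintro (⟨h1, h2⟩ | ⟨h1, h2⟩) <;> subst h1 <;> subst h2 <;>
        rw [Prod.mk.injEq] <;> constructor <;> field_simp <;> ring
  · rw [Prod.mk.injEq]
    constructor <;> field_simp <;> ring
  · rw [Prod.mk.injEq]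
    constructor <;> field_simp <;> ring
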